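/- Let g : 𝒲 → ℝ be a regularizer with |g(w₁) − g(w₂)| ≤ B for all w₁, w₂ ∈ 𝒲 and some B > 0, let λ > 0, and let W_RERM be a minimizer of w ↦ (1/n)Σ_{i=1}^n ℓ(w, Zᵢ) + (λ/n) g(w). Assume W = W_RERM satisfies the expected (η, c)-central condition, i.e. log E_{P_W ⊗ μ}[exp(−η r(W', Z'))] ≤ −c η E_{P_W ⊗ μ}[r(W', Z')] with η > 0, 0 < c ≤ 1. Then for every η' ∈ (0, η]: E[ℛ(W_RERM)] ≤ (1/c) · E[ℛ̂_reg(W_RERM, Sₙ)] + λB/(c n) + (1/(c η' n)) Σ_{i=1}^n I(W_RERM; Zᵢ). -/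

import Mathlib

/-!
For each sample `i`, the Donsker–Varadhan variational formula, applied to the joint law of
`(W, Zᵢ)` against the product `P_W ⊗ μ` and the function `-η' r`, bounds `-η' E[r(W, Zᵢ)]` by
`I(W; Zᵢ) + log E_{P_W ⊗ μ}[exp(-η' r)]`. The central condition at `η` transfers to every
`η' ≤ η` by Jensen's inequality for the concave map `t ↦ t ^ (η'/η)`, and bounds that logarithm
by `-c η' E[ℛ(W)]`. Averaging over `i` bounds `c E[ℛ(W)]` by the empirical excess risk plus the
mutual-information term, and the regularizer costs at most `λB/n` since `g(W) - g(w*) ≥ -B`.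
-/

open MeasureTheory ProbabilityTheory

/-- Real-valued Kullback–Leibler divergence `D(P‖Q) = ∫ log (dP/dQ) dP`. -/
noncomputable def klDivR {α : Type*} [MeasurableSpace α] (P Q : Measure α) : ℝ :=
  ∫ x, llr P Q x ∂P

open Real

lemma Real.mul_le_exp_add_mul_log {a b : ℝ} (hb : 0 ≤ b) : b * a ≤ exp a + b * log b := by
  rcases hb.eq_or_lt with rfl | hb
  · simpa using (exp_pos a).le
  have h := mul_le_mul_of_nonneg_left (add_one_le_exp (a - log b)) hb.le
  rw [exp_sub, exp_log hb, mul_div_cancel₀ _ hb.ne'] at h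
  nlinarith

section Integrals

variable {α : Type*} [MeasurableSpace α] {μ J Q : Measure α}

lemma integrable_of_integrable_add_mul_of_abs_le [IsFiniteMeasure μ] {u G : α → ℝ} {a B : ℝ}
    (ha : 0 ≤ a) (hG : ∀ x, |G x| ≤ B) (hu : AEStronglyMeasurable u μ)
    (huG : Integrable (fun x => u x + a * G x) μ) : Integrable u μ := by
  refine huG.norm.add (integrable_const (a * B)) |>.mono' hu (ae_of_all _ fun x => ?_)
  have hGx : |a * G x| ≤ a * B := by
    rw [abs_mul, abs_of_nonneg ha]; exact mul_le_mul_of_nonneg_left (hG x) ha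
  calc ‖u x‖ = |(u x + a * G x) - a * G x| := by rw [add_sub_cancel_right, Real.norm_eq_abs]
    _ ≤ |u x + a * G x| + |a * G x| := abs_sub _ _
    _ ≤ ‖u x + a * G x‖ + a * B := by rw [Real.norm_eq_abs]; gcongr

lemma integral_le_integral_add_mul_add_of_abs_le [IsProbabilityMeasure μ] {u G : α → ℝ}
    {a B : ℝ} (ha : 0 ≤ a) (hG : ∀ x, |G x| ≤ B) (hu : Integrable u μ)
    (huG : Integrable (fun x => u x + a * G x) μ) :
    ∫ x, u x ∂μ ≤ ∫ x, (u x + a * G x) ∂μ + a * B := by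
  calc ∫ x, u x ∂μ ≤ ∫ x, (u x + a * G x + a * B) ∂μ :=
        integral_mono hu (huG.add (integrable_const _)) fun x => by
          have := neg_le_of_abs_le (hG x)
          dsimp only
          nlinarith
    _ = ∫ x, (u x + a * G x) ∂μ + a * B := by
        rw [integral_add huG (integrable_const _), integral_const, probReal_univ, one_smul]

lemma integrable_of_integrable_sum_of_integrable_negPart {ι : Type*} [Fintype ι]
    {f : ι → α → ℝ} (hf : ∀ i, AEStronglyMeasurable (f i) μ)
    (hneg : ∀ i, Integrable (fun x => (f i x)⁻) μ)
    (hsum : Integrable (fun x => ∑ i, f i x) μ) (i : ι) : Integrable (f i) μ := by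
  have hpos : Integrable (fun x => (f i x)⁺) μ := by
    refine (hsum.add (integrable_finsetSum Finset.univ fun j _ => hneg j)).mono' (hf i).posPart
      (ae_of_all _ fun x => ?_)
    rw [Real.norm_of_nonneg (posPart_nonneg _), Pi.add_apply, ← Finset.sum_add_distrib]
    calc (f i x)⁺ ≤ ∑ j, (f j x)⁺ :=
          Finset.single_le_sum (f := fun j => (f j x)⁺) (fun j _ => posPart_nonneg _)
            (Finset.mem_univ i)
      _ = ∑ j, (f j x + (f j x)⁻) :=
          Finset.sum_congr rfl fun j _ => by linarith [posPart_sub_negPart (f j x)]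
  exact (hpos.sub (hneg i)).congr (ae_of_all _ fun x => posPart_sub_negPart (f i x))

lemma log_integral_exp_mul_le [IsProbabilityMeasure μ] {h : α → ℝ} {θ : ℝ} (hθ0 : 0 < θ)
    (hθ1 : θ ≤ 1) (hh : Integrable (fun x => exp (h x)) μ)
    (hθh : Integrable (fun x => exp (θ * h x)) μ) :
    log (∫ x, exp (θ * h x) ∂μ) ≤ θ * log (∫ x, exp (h x) ∂μ) := by
  have hrpow : ∀ x, exp (θ * h x) = exp (h x) ^ θ := fun x => by rw [mul_comm, exp_mul]
  have hpos := integral_exp_pos hθh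
  simp only [hrpow] at hθh hpos ⊢
  have hjensen : ∫ x, exp (h x) ^ θ ∂μ ≤ (∫ x, exp (h x) ∂μ) ^ θ :=
    (Real.concaveOn_rpow hθ0.le hθ1).le_map_integral
      (fun t _ => (continuousAt_rpow_const t θ (Or.inr hθ0.le)).continuousWithinAt)
      isClosed_Ici (ae_of_all _ fun x => (exp_pos (h x)).le) hh hθh
  calc log (∫ x, exp (h x) ^ θ ∂μ) ≤ log ((∫ x, exp (h x) ∂μ) ^ θ) :=
        log_le_log hpos hjensen
    _ = θ * log (∫ x, exp (h x) ∂μ) := log_rpow (integral_exp_pos hh) θ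

end Integrals

section Divergence

variable {α : Type*} [MeasurableSpace α] {J Q : Measure α}

lemma integral_le_klDivR_add_log_integral_exp [IsProbabilityMeasure J] [IsProbabilityMeasure Q]
    (hJQ : J ≪ Q) (hl : Integrable (llr J Q) J) {f : α → ℝ} (hfJ : Integrable f J)
    (hfQ : Integrable (fun x => exp (f x)) Q) :
    ∫ x, f x ∂J ≤ klDivR J Q + log (∫ x, exp (f x) ∂Q) := by
  have : IsProbabilityMeasure (Q.tilted f) := isProbabilityMeasure_tilted hfQ
  have gibbs := InformationTheory.integral_llr_add_sub_measure_univ_nonneg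
    (hJQ.trans (absolutelyContinuous_tilted hfQ)) (integrable_llr_tilted_right hJQ hfJ hl hfQ)
  rw [integral_llr_tilted_right hJQ hfJ hfQ hl] at gibbs
  simp only [probReal_univ] at gibbs
  unfold klDivR
  linarith

lemma integrable_of_nonneg_of_integrable_exp [IsFiniteMeasure J] [SigmaFinite Q] (hJQ : J ≪ Q)
    (hl : Integrable (llr J Q) J) {f : α → ℝ} (hf : Measurable f) (h0 : ∀ x, 0 ≤ f x)
    (hfQ : Integrable (fun x => exp (f x)) Q) : Integrable f J := by
  set ρ : α → ℝ := fun x => (J.rnDeriv Q x).toReal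
  have hdom : Integrable (fun x => exp (f x) + ρ x * |llr J Q x|) Q := by
    refine hfQ.add (((integrable_rnDeriv_smul_iff hJQ).2 hl).norm.congr (ae_of_all _ fun x => ?_))
    simp [ρ]
  refine ⟨hf.aestronglyMeasurable, (hasFiniteIntegral_iff_ofReal (ae_of_all _ h0)).2 ?_⟩
  refine lt_of_le_of_lt ?_ hdom.lintegral_lt_top
  rw [← lintegral_rnDeriv_mul hJQ hf.ennreal_ofReal.aemeasurable]
  refine lintegral_mono_ae ?_
  filter_upwards [Measure.rnDeriv_lt_top J Q] with x hx
  rw [← ENNReal.ofReal_toReal hx.ne, ← ENNReal.ofReal_mul ENNReal.toReal_nonneg]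
  refine ENNReal.ofReal_le_ofReal ?_
  calc ρ x * f x ≤ exp (f x) + ρ x * llr J Q x := mul_le_exp_add_mul_log ENNReal.toReal_nonneg
    _ ≤ exp (f x) + ρ x * |llr J Q x| := by gcongr; exact le_abs_self _

lemma integrable_negPart_of_integrable_exp_neg_mul [IsFiniteMeasure J] [IsFiniteMeasure Q]
    (hJQ : J ≪ Q) (hl : Integrable (llr J Q) J) {f : α → ℝ} (hf : Measurable f) {η : ℝ}
    (hη : 0 < η) (hfQ : Integrable (fun x => exp (-η * f x)) Q) :
    Integrable (fun x => (f x)⁻) J := by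
  have hexp : Integrable (fun x => exp (η * (f x)⁻)) Q := by
    refine (hfQ.add (integrable_const 1)).mono' (hf.negPart.const_mul η).exp.aestronglyMeasurable
      (ae_of_all _ fun x => ?_)
    rw [Real.norm_of_nonneg (exp_pos _).le]
    rcases le_total 0 (f x) with hfx | hfx
    · simp [negPart_eq_zero.2 hfx, (exp_pos _).le]
    · simp [negPart_eq_neg.2 hfx]
  have := (integrable_of_nonneg_of_integrable_exp hJQ hl (hf.negPart.const_mul η)
    (fun x => mul_nonneg hη.le (negPart_nonneg _)) hexp).const_mul η⁻¹
  simpa only [inv_mul_cancel_left₀ hη.ne'] using this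

def ExpectedCentralCondition (Q : Measure α) (f : α → ℝ) (η c : ℝ) : Prop :=
  log (∫ x, exp (-η * f x) ∂Q) ≤ -c * η * ∫ x, f x ∂Q

lemma ExpectedCentralCondition.mono [IsProbabilityMeasure Q] {f : α → ℝ} {η η' c : ℝ}
    (h : ExpectedCentralCondition Q f η c) (hη' : 0 < η') (hη'η : η' ≤ η)
    (hη_int : Integrable (fun x => exp (-η * f x)) Q)
    (hη'_int : Integrable (fun x => exp (-η' * f x)) Q) :
    ExpectedCentralCondition Q f η' c := by
  have hη : 0 < η := hη'.trans_le hη'η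
  have hθ : ∀ t, η' / η * (-η * t) = -η' * t := fun t => by field_simp
  have lyapunov := log_integral_exp_mul_le (div_pos hη' hη) ((div_le_one hη).2 hη'η) hη_int
    (by simpa only [hθ] using hη'_int)
  simp only [hθ] at lyapunov
  calc log (∫ x, exp (-η' * f x) ∂Q) ≤ η' / η * (-c * η * ∫ x, f x ∂Q) :=
        lyapunov.trans (mul_le_mul_of_nonneg_left h (div_pos hη' hη).le)
    _ = -c * η' * ∫ x, f x ∂Q := by field_simp

lemma ExpectedCentralCondition.mul_integral_le_klDivR_add [IsProbabilityMeasure J]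
    [IsProbabilityMeasure Q] {f : α → ℝ} {η c : ℝ} (h : ExpectedCentralCondition Q f η c)
    (hJQ : J ≪ Q) (hl : Integrable (llr J Q) J) (hfJ : Integrable f J)
    (hfQ : Integrable (fun x => exp (-η * f x)) Q) :
    c * η * ∫ x, f x ∂Q ≤ klDivR J Q + η * ∫ x, f x ∂J := by
  have dv := integral_le_klDivR_add_log_integral_exp hJQ hl (hfJ.const_mul (-η)) hfQ
  rw [integral_const_mul] at dv
  unfold ExpectedCentralCondition at h
  linarith

end Divergence

lemma le_of_forall_mul_le_add {ι : Type*} [Fintype ι] [Nonempty ι] {c η E : ℝ} (hc : 0 < c)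
    (hη : 0 < η) (K a : ι → ℝ) (h : ∀ i, c * η * E ≤ K i + η * a i) :
    E ≤ 1 / c * ((Fintype.card ι : ℝ)⁻¹ * ∑ i, a i)
      + 1 / (c * η * Fintype.card ι) * ∑ i, K i := by
  have hn : (0 : ℝ) < Fintype.card ι := by exact_mod_cast Fintype.card_pos
  have hsum := Finset.sum_le_sum fun i (_ : i ∈ Finset.univ) => h i
  rw [Finset.sum_const, Finset.card_univ, nsmul_eq_mul, Finset.sum_add_distrib,
    ← Finset.mul_sum] at hsum
  have hrhs : 1 / c * ((Fintype.card ι : ℝ)⁻¹ * ∑ i, a i)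
      + 1 / (c * η * Fintype.card ι) * ∑ i, K i
      = (∑ i, K i + η * ∑ i, a i) / (c * η * Fintype.card ι) := by
    field_simp
    ring
  rw [hrhs, le_div_iff₀ (by positivity)]
  linarith

theorem rerm_excess_risk_bound_general
    {Ω 𝒲 𝒵 : Type*} [MeasurableSpace Ω] [MeasurableSpace 𝒲] [MeasurableSpace 𝒵]
    (P : Measure Ω) [IsProbabilityMeasure P]
    (μ : Measure 𝒵) [IsProbabilityMeasure μ]
    (ℓ : 𝒲 → 𝒵 → ℝ) (hℓ : Measurable (Function.uncurry ℓ))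
    (n : ℕ) (hn : 0 < n)
    (Z : Fin n → Ω → 𝒵) (hZmeas : ∀ i, Measurable (Z i))
    (wstar : 𝒲)
    (r : 𝒲 → 𝒵 → ℝ) (hr : r = fun w z => ℓ w z - ℓ wstar z)
    -- regularizer with bounded oscillation and coefficient `λ`
    (g : 𝒲 → ℝ) (B : ℝ) (hg : ∀ w₁ w₂, |g w₁ - g w₂| ≤ B)
    (lam : ℝ) (hlam : 0 < lam)
    -- `W` is the regularized empirical risk minimizer
    (W : Ω → 𝒲) (hW : Measurable W)
    (η c : ℝ) (hc : 0 < c)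
    -- all expectations appearing are finite
    (hrInt : Integrable (fun p : 𝒲 × 𝒵 => r p.1 p.2) ((P.map W).prod μ))
    (hexpInt : ∀ η' : ℝ, 0 < η' → η' ≤ η →
      Integrable (fun p : 𝒲 × 𝒵 => Real.exp (-η' * r p.1 p.2)) ((P.map W).prod μ))
    (hEmpRegInt : Integrable (fun ω =>
      (n : ℝ)⁻¹ * ∑ i, r (W ω) (Z i ω) + (lam / n) * (g (W ω) - g wstar)) P)
    (hac : ∀ i, P.map (fun ω => (W ω, Z i ω)) ≪ (P.map W).prod μ)
    (hllr : ∀ i, Integrable (llr (P.map (fun ω => (W ω, Z i ω))) ((P.map W).prod μ))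
        (P.map (fun ω => (W ω, Z i ω))))
    -- expected `(η, c)`-central condition for the RERM hypothesis
    (hcentral : Real.log (∫ p, Real.exp (-η * r p.1 p.2) ∂((P.map W).prod μ))
      ≤ -c * η * ∫ p, r p.1 p.2 ∂((P.map W).prod μ)) :
    ∀ η' : ℝ, 0 < η' → η' ≤ η →
    ∫ ω, (∫ z, r (W ω) z ∂μ) ∂P
      ≤ (1 / c) * (∫ ω, ((n : ℝ)⁻¹ * ∑ i, r (W ω) (Z i ω)
            + (lam / n) * (g (W ω) - g wstar)) ∂P)
        + lam * B / (c * n)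
        + (1 / (c * η' * n)) * ∑ i,
            klDivR (P.map (fun ω => (W ω, Z i ω))) ((P.map W).prod μ) := by
  intro η' hη' hη'η
  have : IsProbabilityMeasure (P.map W) := Measure.isProbabilityMeasure_map hW.aemeasurable
  have : NeZero n := ⟨hn.ne'⟩
  have hrm : Measurable fun p : 𝒲 × 𝒵 => r p.1 p.2 := by
    subst hr; exact hℓ.sub (hℓ.comp (measurable_const.prodMk measurable_snd))
  have hpair i : Measurable fun ω => (W ω, Z i ω) := hW.prodMk (hZmeas i)
  have : ∀ i, IsProbabilityMeasure (P.map fun ω => (W ω, Z i ω)) := fun i =>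
    Measure.isProbabilityMeasure_map (hpair i).aemeasurable
  have hmap i {f : 𝒲 × 𝒵 → ℝ} (hf : Measurable f) :=
    integrable_map_measure hf.aestronglyMeasurable (hpair i).aemeasurable (μ := P)
  have hrisk : ∫ ω, ∫ z, r (W ω) z ∂μ ∂P = ∫ p, r p.1 p.2 ∂(P.map W).prod μ := by
    rw [integral_prod _ hrInt, integral_map hW.aemeasurable
      hrm.stronglyMeasurable.integral_prod_right'.aestronglyMeasurable]
  have hG ω : |g (W ω) - g wstar| ≤ B := hg _ _
  have hemp : Integrable (fun ω => (n : ℝ)⁻¹ * ∑ i, r (W ω) (Z i ω)) P :=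
    integrable_of_integrable_add_mul_of_abs_le (by positivity) hG
      ((Finset.measurable_sum _ fun i _ => hrm.comp (hpair i)).const_mul _).aestronglyMeasurable
      hEmpRegInt
  -- negative parts are controlled by the exponential moment and `I(W; Zᵢ)`, positive parts by
  -- the integrable sum
  have hint : ∀ i, Integrable (fun ω => r (W ω) (Z i ω)) P :=
    integrable_of_integrable_sum_of_integrable_negPart
      (fun i => (hrm.comp (hpair i)).aestronglyMeasurable)
      (fun i => (hmap i hrm.negPart).1 (integrable_negPart_of_integrable_exp_neg_mul (hac i)
        (hllr i) hrm hη' (hexpInt η' hη' hη'η)))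
      (by simpa [mul_inv_cancel_left₀ (NeZero.ne (n : ℝ))] using hemp.const_mul (n : ℝ))
  have hcentral' : ExpectedCentralCondition ((P.map W).prod μ) (fun p => r p.1 p.2) η' c :=
    ExpectedCentralCondition.mono hcentral hη' hη'η (hexpInt η (hη'.trans_le hη'η) le_rfl)
      (hexpInt η' hη' hη'η)
  have hkey i := hcentral'.mul_integral_le_klDivR_add (hac i) (hllr i)
    ((hmap i hrm).2 (hint i)) (hexpInt η' hη' hη'η)
  simp only [integral_map (hpair _).aemeasurable hrm.aestronglyMeasurable] at hkey
  set K := ∑ i, klDivR (P.map (fun ω => (W ω, Z i ω))) ((P.map W).prod μ)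
  calc ∫ ω, ∫ z, r (W ω) z ∂μ ∂P
      ≤ 1 / c * ((n : ℝ)⁻¹ * ∑ i, ∫ ω, r (W ω) (Z i ω) ∂P) + 1 / (c * η' * n) * K := by
        simpa [hrisk] using le_of_forall_mul_le_add hc hη' _ _ hkey
    _ ≤ 1 / c * (∫ ω, ((n : ℝ)⁻¹ * ∑ i, r (W ω) (Z i ω)
            + lam / n * (g (W ω) - g wstar)) ∂P + lam / n * B) + 1 / (c * η' * n) * K := by
        rw [← integral_finsetSum _ fun i _ => hint i, ← integral_const_mul]
        gcongr
        exact integral_le_integral_add_mul_add_of_abs_le (by positivity) hG hemp hEmpRegInt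
    _ = _ := by ring

/-- **Lemma 1 (excess risk bound for regularized ERM).** -/
theorem rerm_excess_risk_bound
    {Ω 𝒲 𝒵 : Type*} [MeasurableSpace Ω] [MeasurableSpace 𝒲] [MeasurableSpace 𝒵]
    (P : Measure Ω) [IsProbabilityMeasure P]
    (μ : Measure 𝒵) [IsProbabilityMeasure μ]
    (ℓ : 𝒲 → 𝒵 → ℝ) (hℓ : Measurable (Function.uncurry ℓ))
    (n : ℕ) (hn : 0 < n)
    (Z : Fin n → Ω → 𝒵) (hZmeas : ∀ i, Measurable (Z i))
    (hZlaw : ∀ i, P.map (Z i) = μ)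
    (hindep : iIndepFun Z P)
    (wstar : 𝒲) (hwstar : ∀ w, ∫ z, ℓ wstar z ∂μ ≤ ∫ z, ℓ w z ∂μ)
    (r : 𝒲 → 𝒵 → ℝ) (hr : r = fun w z => ℓ w z - ℓ wstar z)
    -- regularizer with bounded oscillation and coefficient `λ`
    (g : 𝒲 → ℝ) (B : ℝ) (hB : 0 < B) (hg : ∀ w₁ w₂, |g w₁ - g w₂| ≤ B)
    (lam : ℝ) (hlam : 0 < lam)
    -- `W` is the regularized empirical risk minimizer
    (W : Ω → 𝒲) (hW : Measurable W)
    (hRERM : ∀ ω, ∀ w,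
      (n : ℝ)⁻¹ * ∑ i, ℓ (W ω) (Z i ω) + (lam / n) * g (W ω)
        ≤ (n : ℝ)⁻¹ * ∑ i, ℓ w (Z i ω) + (lam / n) * g w)
    (η c : ℝ) (hη : 0 < η) (hc : 0 < c) (hc1 : c ≤ 1)
    -- all expectations appearing are finite
    (hrInt : Integrable (fun p : 𝒲 × 𝒵 => r p.1 p.2) ((P.map W).prod μ))
    (hexpInt : ∀ η' : ℝ, 0 < η' → η' ≤ η →
      Integrable (fun p : 𝒲 × 𝒵 => Real.exp (-η' * r p.1 p.2)) ((P.map W).prod μ))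
    (hRiskInt : Integrable (fun ω => ∫ z, r (W ω) z ∂μ) P)
    (hEmpRegInt : Integrable (fun ω =>
      (n : ℝ)⁻¹ * ∑ i, r (W ω) (Z i ω) + (lam / n) * (g (W ω) - g wstar)) P)
    (hac : ∀ i, P.map (fun ω => (W ω, Z i ω)) ≪ (P.map W).prod μ)
    (hllr : ∀ i, Integrable (llr (P.map (fun ω => (W ω, Z i ω))) ((P.map W).prod μ))
        (P.map (fun ω => (W ω, Z i ω))))
    -- expected `(η, c)`-central condition for the RERM hypothesis
    (hcentral : Real.log (∫ p, Real.exp (-η * r p.1 p.2) ∂((P.map W).prod μ))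
      ≤ -c * η * ∫ p, r p.1 p.2 ∂((P.map W).prod μ)) :
    ∀ η' : ℝ, 0 < η' → η' ≤ η →
    ∫ ω, (∫ z, r (W ω) z ∂μ) ∂P
      ≤ (1 / c) * (∫ ω, ((n : ℝ)⁻¹ * ∑ i, r (W ω) (Z i ω)
            + (lam / n) * (g (W ω) - g wstar)) ∂P)
        + lam * B / (c * n)
        + (1 / (c * η' * n)) * ∑ i,
            klDivR (P.map (fun ω => (W ω, Z i ω))) ((P.map W).prod μ) :=
  rerm_excess_risk_bound_general P μ ℓ hℓ n hn Z hZmeas wstar r hr g B hg lam hlam W hW η c hc hrInt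
    hexpInt hEmpRegInt hac hllr hcentral
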